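/- arXiv:2208.13267 — 3 statements merged into one kernel-verified Lean document; each statement's English description precedes it below -/
import Mathlib

section
/- Let f : ℝⁿ → ℝⁿ be continuous, ψ : ℝⁿ → ℝⁿ a C¹ diffeomorphism with C¹ inverse, g ∈ ℝⁿ, and V : ℝⁿ → ℝ a Lyapunov function for the base system at g, i.e. V(g) = 0 and V(x) > 0 for all x ≠ g. Define V_ψ : ℝⁿ → ℝ by V_ψ(b) = V(ψ⁻¹(b)). Then V_ψ(ψ(g)) = 0 and V_ψ(b) > 0 for all b ≠ ψ(g); moreover, for every differentiable solution b of the diffeomorphed system b'(t) = Dψ(ψ⁻¹(b(t))) f(ψ⁻¹(b(t))), one has V_ψ(b(t)) = V(a(t)) for all t, where a = ψ⁻¹ ∘ b solves a' = f(a). Consequently, if t ↦ V(a(t)) is strictly decreasing along every solution a of the base system with a(t) ≠ g, then t ↦ V_ψ(b(t)) is strictly decreasing along every solution b of the diffeomorphed system with b(t) ≠ ψ(g). -/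
/-- if `V` is a Lyapunov function for the base system at `g`
(`V g = 0`, `V x > 0` for `x ≠ g`), then `V_ψ = V ∘ ψ⁻¹` satisfies `V_ψ (ψ g) = 0` and
`V_ψ b > 0` for `b ≠ ψ g`; along any solution `b` of the diffeomorphed system one has
`V_ψ (b t) = V (a t)` with `a = ψ⁻¹ ∘ b`, and if `V` strictly decreases along every
solution of the base system away from `g`, then `V_ψ` strictly decreases along every
solution of the diffeomorphed system away from `ψ g`. -/
theorem lyapunov_of_diffeomorphed_ds {n : ℕ}
    (f ψ ψinv : EuclideanSpace ℝ (Fin n) → EuclideanSpace ℝ (Fin n))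
    (hf : Continuous f)
    (hψbij : Function.Bijective ψ)
    (hψ : ContDiff ℝ 1 ψ) (hψinv : ContDiff ℝ 1 ψinv)
    (hleft : Function.LeftInverse ψinv ψ)
    (hright : Function.RightInverse ψinv ψ)
    (g : EuclideanSpace ℝ (Fin n))
    (V : EuclideanSpace ℝ (Fin n) → ℝ)
    (hV0 : V g = 0) (hVpos : ∀ x, x ≠ g → 0 < V x) :
    (V (ψinv (ψ g)) = 0)
    ∧ (∀ b, b ≠ ψ g → 0 < V (ψinv b))
    ∧ (∀ b : ℝ → EuclideanSpace ℝ (Fin n),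
        (∀ t : ℝ, HasDerivAt b (fderiv ℝ ψ (ψinv (b t)) (f (ψinv (b t)))) t) →
        ∀ t : ℝ, V (ψinv (b t)) = V ((fun s => ψinv (b s)) t))
    ∧ ((∀ a : ℝ → EuclideanSpace ℝ (Fin n),
          (∀ t : ℝ, HasDerivAt a (f (a t)) t) →
          (∀ t : ℝ, a t ≠ g) →
          StrictAnti (fun t => V (a t))) →
        (∀ b : ℝ → EuclideanSpace ℝ (Fin n),
          (∀ t : ℝ, HasDerivAt b (fderiv ℝ ψ (ψinv (b t)) (f (ψinv (b t)))) t) →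
          (∀ t : ℝ, b t ≠ ψ g) →
          StrictAnti (fun t => V (ψinv (b t))))) := by
  refine ⟨by rw [hleft g]; exact hV0, ?_, ?_, ?_⟩
  · intro b hb
    apply hVpos
    intro h
    exact hb (by rw [← hright b, h])
  · intro b _ t; rfl
  · intro H b hb hbne
    have key : ∀ x, (fderiv ℝ ψinv (ψ x)).comp (fderiv ℝ ψ x)
        = ContinuousLinearMap.id ℝ _ := by
      intro x
      have h1 := (hψ.differentiable one_ne_zero x).hasFDerivAt
      have h2 := (hψinv.differentiable one_ne_zero (ψ x)).hasFDerivAt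
      have hcomp := h2.comp x h1
      have hid : HasFDerivAt (ψinv ∘ ψ)
          (ContinuousLinearMap.id ℝ (EuclideanSpace ℝ (Fin n))) x := by
        have : (ψinv ∘ ψ) = id := funext hleft
        rw [this]; exact hasFDerivAt_id x
      exact hcomp.unique hid
    have ha : ∀ t : ℝ, HasDerivAt (fun s => ψinv (b s)) (f (ψinv (b t))) t := by
      intro t
      have h2 := (hψinv.differentiable one_ne_zero (b t)).hasFDerivAt
      have hc := h2.comp_hasDerivAt t (hb t)
      have heq : fderiv ℝ ψinv (b t) (fderiv ℝ ψ (ψinv (b t)) (f (ψinv (b t))))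
          = f (ψinv (b t)) := by
        have hk := key (ψinv (b t))
        rw [hright (b t)] at hk
        calc fderiv ℝ ψinv (b t) (fderiv ℝ ψ (ψinv (b t)) (f (ψinv (b t))))
            = ((fderiv ℝ ψinv (b t)).comp (fderiv ℝ ψ (ψinv (b t)))) (f (ψinv (b t))) := rfl
          _ = f (ψinv (b t)) := by rw [hk]; rfl
      rwa [heq] at hc
    exact H (fun s => ψinv (b s)) ha (fun t h => hbne t (by rw [← hright (b t)]; exact congrArg ψ h))
end

section
/- Let m₁, m₂ ∈ ℝ^{n+1} be unit vectors with m₂ ≠ m₁ and m₂ ≠ -m₁, and let v, w ∈ ℝ^{n+1} satisfy ⟨m₁, v⟩ = ⟨m₁, w⟩ = 0. Define the parallel transport T_{m₁→m₂}(v) = v − (⟨Log_{m₁}(m₂), v⟩ / d(m₁, m₂)²) · (Log_{m₁}(m₂) + Log_{m₂}(m₁)), where d(m₁, m₂) = arccos(⟨m₂, m₁⟩) and Log is the spherical logarithmic map. Then (i) ⟨m₂, T_{m₁→m₂}(v)⟩ = 0, so parallel transport maps the tangent space at m₁ into the tangent space at m₂, and (ii) ⟨T_{m₁→m₂}(v),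 T_{m₁→m₂}(w)⟩ = ⟨v, w⟩, so it preserves inner products (in particular norms and angles) of tangent vectors. -/
open scoped RealInnerProductSpace

/-- The spherical logarithmic map
`Log_m a = d(m,a) • (a - ⟪m,a⟫ m) / ‖a - ⟪m,a⟫ m‖` with `d(m,a) = arccos ⟪a,m⟫`. -/
noncomputable def sphLog {n : ℕ} (m a : EuclideanSpace ℝ (Fin (n + 1))) :
    EuclideanSpace ℝ (Fin (n + 1)) :=
  (Real.arccos ⟪a, m⟫ / ‖a - ⟪m, a⟫ • m‖) • (a - ⟪m, a⟫ • m)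

/-- Spherical parallel transport of a tangent vector `v` from `m₁` to `m₂`:
`T_{m₁→m₂} v = v - (⟪Log_{m₁} m₂, v⟫ / d(m₁,m₂)²) • (Log_{m₁} m₂ + Log_{m₂} m₁)`. -/
noncomputable def sphTransport {n : ℕ} (m₁ m₂ v : EuclideanSpace ℝ (Fin (n + 1))) :
    EuclideanSpace ℝ (Fin (n + 1)) :=
  v - (⟪sphLog m₁ m₂, v⟫ / (Real.arccos ⟪m₂, m₁⟫) ^ 2) • (sphLog m₁ m₂ + sphLog m₂ m₁)

lemma sphTransport_eq {n : ℕ}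
    (m₁ m₂ v : EuclideanSpace ℝ (Fin (n + 1)))
    (hm₁ : ‖m₁‖ = 1) (hm₂ : ‖m₂‖ = 1) (hne : m₂ ≠ m₁) (hne' : m₂ ≠ -m₁)
    (hv : ⟪m₁, v⟫ = 0) :
    sphTransport m₁ m₂ v = v - (⟪m₂, v⟫ / (1 + ⟪m₂, m₁⟫)) • (m₁ + m₂) := by
  set s : ℝ := ⟪m₂, m₁⟫ with hs
  have hcomm : ⟪m₁, m₂⟫ = s := (real_inner_comm m₁ m₂).symm
  have hs1 : s < 1 := by
    have := (inner_eq_one_iff_of_norm_eq_one (𝕜 := ℝ) hm₂ hm₁).not.mpr hne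
    have hle : s ≤ 1 := by
      have := abs_real_inner_le_norm m₂ m₁
      rw [hm₁, hm₂] at this
      nlinarith [abs_le.mp this]
    exact lt_of_le_of_ne hle this
  have hs2 : -1 < s := by
    have h1 : ⟪m₂, -m₁⟫ = -s := by simp [hs, inner_neg_right]
    have hne2 : ⟪m₂, -m₁⟫ ≠ 1 := by
      have hnm : ‖(-m₁ : EuclideanSpace ℝ (Fin (n+1)))‖ = 1 := by simpa using hm₁
      exact (inner_eq_one_iff_of_norm_eq_one (𝕜 := ℝ) hm₂ hnm).not.mpr hne'
    have hle : -s ≤ 1 := by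
      have := abs_real_inner_le_norm m₂ m₁
      rw [hm₁, hm₂] at this
      nlinarith [abs_le.mp this]
    have : -s < 1 := lt_of_le_of_ne hle (by rwa [h1] at hne2)
    linarith
  have hr2 : ‖m₂ - s • m₁‖ ^ 2 = 1 - s ^ 2 := by
    rw [norm_sub_sq_real, real_inner_smul_right, norm_smul, hm₁, hm₂]
    simp [hs, abs_mul]
    ring
  have h1s : (0:ℝ) < 1 + s := by linarith
  have hθ : Real.arccos s ≠ 0 := ne_of_gt (Real.arccos_pos.mpr hs1)
  set r := ‖m₂ - s • m₁‖ with hrdef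
  have hrpos : 0 < r := by
    nlinarith [hr2, norm_nonneg (m₂ - s • m₁)]
  have hr2' : ‖m₁ - s • m₂‖ = r := by
    have h : ‖m₁ - s • m₂‖ ^ 2 = r ^ 2 := by
      rw [hr2, norm_sub_sq_real, real_inner_smul_right, norm_smul, hm₁, hm₂, hcomm]
      simp [abs_mul]
      ring
    rw [← Real.sqrt_sq (norm_nonneg (m₁ - s • m₂)), h, Real.sqrt_sq hrpos.le]
  rw [sphTransport, sphLog, sphLog, hcomm, ← hs, hr2']
  rw [real_inner_smul_left, inner_sub_left, real_inner_smul_left, hv]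
  set p : ℝ := ⟪m₂, v⟫ with hp
  match_scalars
  · ring
  · rw [← hrdef]
    field_simp
    linear_combination p * hr2
  · rw [← hrdef]
    field_simp
    linear_combination p * hr2

/-- spherical parallel transport from `m₁` to `m₂` maps tangent vectors at
`m₁` to tangent vectors at `m₂` and preserves inner products (hence norms and angles)
of tangent vectors. -/
theorem sphere_parallel_transport_isometry {n : ℕ}
    (m₁ m₂ v w : EuclideanSpace ℝ (Fin (n + 1)))
    (hm₁ : ‖m₁‖ = 1) (hm₂ : ‖m₂‖ = 1) (hne : m₂ ≠ m₁) (hne' : m₂ ≠ -m₁)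
    (hv : ⟪m₁, v⟫ = 0) (hw : ⟪m₁, w⟫ = 0) :
    ⟪m₂, sphTransport m₁ m₂ v⟫ = 0 ∧
    ⟪sphTransport m₁ m₂ v, sphTransport m₁ m₂ w⟫ = ⟪v, w⟫ := by
  have keyv := sphTransport_eq m₁ m₂ v hm₁ hm₂ hne hne' hv
  have keyw := sphTransport_eq m₁ m₂ w hm₁ hm₂ hne hne' hw
  set s : ℝ := ⟪m₂, m₁⟫ with hs
  have hs1 : s < 1 := by
    have := (inner_eq_one_iff_of_norm_eq_one (𝕜 := ℝ) hm₂ hm₁).not.mpr hne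
    have hle : s ≤ 1 := by
      have := abs_real_inner_le_norm m₂ m₁
      rw [hm₁, hm₂] at this
      nlinarith [abs_le.mp this]
    exact lt_of_le_of_ne hle this
  have hs2 : -1 < s := by
    have h1 : ⟪m₂, -m₁⟫ = -s := by simp [hs, inner_neg_right]
    have hne2 : ⟪m₂, -m₁⟫ ≠ 1 := by
      have hnm : ‖(-m₁ : EuclideanSpace ℝ (Fin (n+1)))‖ = 1 := by simpa using hm₁
      exact (inner_eq_one_iff_of_norm_eq_one (𝕜 := ℝ) hm₂ hnm).not.mpr hne'
    have hle : -s ≤ 1 := by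
      have := abs_real_inner_le_norm m₂ m₁
      rw [hm₁, hm₂] at this
      nlinarith [abs_le.mp this]
    have : -s < 1 := lt_of_le_of_ne hle (by rwa [h1] at hne2)
    linarith
  have h1s : (1:ℝ) + s ≠ 0 := by intro h; linarith
  have hm₂₂ : ⟪m₂, m₂⟫ = (1:ℝ) := by
    rw [real_inner_self_eq_norm_sq, hm₂]; norm_num
  have hm₁₁ : ⟪m₁, m₁⟫ = (1:ℝ) := by
    rw [real_inner_self_eq_norm_sq, hm₁]; norm_num
  have hv' : ⟪v, m₁⟫ = 0 := (real_inner_comm m₁ v).trans hv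
  have hw' : ⟪w, m₁⟫ = 0 := (real_inner_comm m₁ w).trans hw
  have hvm₂ : ⟪v, m₂⟫ = ⟪m₂, v⟫ := real_inner_comm m₂ v
  have hwm₂ : ⟪w, m₂⟫ = ⟪m₂, w⟫ := real_inner_comm m₂ w
  have hcomm : ⟪m₁, m₂⟫ = s := (real_inner_comm m₁ m₂).symm
  constructor
  · rw [keyv]
    simp only [inner_sub_right, inner_add_right, real_inner_smul_right, hm₂₂, hm₁₁, ← hs]
    field_simp
    ring
  · rw [keyv, keyw]
    simp only [inner_sub_left, inner_sub_right, inner_add_left, inner_add_right,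
      real_inner_smul_left, real_inner_smul_right, hm₂₂, hv, hw, hv', hw', hvm₂, hwm₂,
      hcomm, hm₁₁, ← hs]
    field_simp
    ring
end

section
/- Let g ∈ ℝ^{n+1} be a unit vector, k > 0, and let a : [0, ∞) → ℝ^{n+1} be differentiable with ‖a(t)‖ = 1, a(t) ≠ g, and a(t) ≠ -g for all t ≥ 0, satisfying the geodesic dynamical system a'(t) = k · Log_{a(t)}(g), where Log_m(x) = arccos(⟨x, m⟩)·(x − ⟨m, x⟩m)/‖x − ⟨m, x⟩m‖ is the spherical logarithmic map. Then the geodesic distance to the goal decays exponentially: arccos(⟨a(t), g⟩) = e^{-kt} · arccos(⟨a(0), g⟩) for all t ≥ 0, and consequently a(t) → g as t → ∞. -/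
open Filter
open scoped RealInnerProductSpace

/-- The inner product of the spherical log with the goal. -/
lemma sphLog_inner_goal {n : ℕ} (m g : EuclideanSpace ℝ (Fin (n + 1)))
    (hm : ‖m‖ = 1) (hg : ‖g‖ = 1) (h1 : ⟪m, g⟫ < 1) (h2 : -1 < ⟪m, g⟫) :
    ⟪sphLog m g, g⟫ = Real.arccos ⟪m, g⟫ * Real.sqrt (1 - ⟪m, g⟫ ^ 2) := by
  set c : ℝ := ⟪m, g⟫ with hc
  have hgm : ⟪g, m⟫ = c := (real_inner_comm g m).symm
  have hcsq : c ^ 2 < 1 := by nlinarith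
  have hpos : (0:ℝ) < 1 - c ^ 2 := by linarith
  have hnormsq : ‖g - c • m‖ ^ 2 = 1 - c ^ 2 := by
    have h1' : ⟪g, c • m⟫ = c * c := by rw [real_inner_smul_right, hgm]
    rw [norm_sub_sq_real, h1', norm_smul, mul_pow, hg, hm, Real.norm_eq_abs, sq_abs]
    ring
  have hnorm : ‖g - c • m‖ = Real.sqrt (1 - c ^ 2) := by
    rw [← hnormsq]
    exact (Real.sqrt_sq (norm_nonneg _)).symm
  have hsqrtpos : 0 < Real.sqrt (1 - c ^ 2) := Real.sqrt_pos.2 hpos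
  rw [sphLog, hgm]
  rw [real_inner_smul_left]
  rw [inner_sub_left, real_inner_smul_left, real_inner_self_eq_norm_sq, hg]
  rw [hnorm]
  have hs : Real.sqrt (1 - c ^ 2) * Real.sqrt (1 - c ^ 2) = 1 - c ^ 2 :=
    Real.mul_self_sqrt hpos.le
  rw [show (⟪m, g⟫ : ℝ) = c from rfl]
  field_simp
  linear_combination (-(Real.arccos c)) * hs

/-- along any differentiable solution on the unit sphere of the geodesic
dynamical system `a' = k • Log_{a} g` (with gain `k > 0`, goal `g`, and `a t ≠ ±g`),
the geodesic distance to the goal decays exponentially: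
`arccos ⟪a t, g⟫ = e^{-kt} arccos ⟪a 0, g⟫` for all `t ≥ 0`, and `a t → g` as `t → ∞`. -/
theorem sphere_geodesic_ds_exponential_convergence {n : ℕ}
    (g : EuclideanSpace ℝ (Fin (n + 1))) (hg : ‖g‖ = 1)
    (k : ℝ) (hk : 0 < k)
    (a : ℝ → EuclideanSpace ℝ (Fin (n + 1)))
    (hunit : ∀ t : ℝ, 0 ≤ t → ‖a t‖ = 1)
    (hne : ∀ t : ℝ, 0 ≤ t → a t ≠ g)
    (hne' : ∀ t : ℝ, 0 ≤ t → a t ≠ -g)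
    (hode : ∀ t : ℝ, 0 ≤ t → HasDerivAt a (k • sphLog (a t) g) t) :
    (∀ t : ℝ, 0 ≤ t →
      Real.arccos ⟪a t, g⟫ = Real.exp (-k * t) * Real.arccos ⟪a 0, g⟫)
    ∧ Tendsto a atTop (nhds g) := by
  -- basic bounds on the inner product
  have hlt : ∀ t : ℝ, 0 ≤ t → ⟪a t, g⟫ < 1 := by
    intro t ht
    have hle : ⟪a t, g⟫ ≤ 1 := by
      have := abs_real_inner_le_norm (a t) g
      rw [hunit t ht, hg] at this
      have := abs_le.1 (by simpa using this)
      exact this.2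
    rcases lt_or_eq_of_le hle with h | h
    · exact h
    · exact absurd ((inner_eq_one_iff_of_norm_eq_one (hunit t ht) hg).1 h) (hne t ht)
  have hgt : ∀ t : ℝ, 0 ≤ t → -1 < ⟪a t, g⟫ := by
    intro t ht
    have hle : -1 ≤ ⟪a t, g⟫ := by
      have := abs_real_inner_le_norm (a t) g
      rw [hunit t ht, hg] at this
      have := abs_le.1 (by simpa using this)
      exact this.1
    rcases lt_or_eq_of_le hle with h | h
    · exact h
    · exfalso
      apply hne' t ht
      have h' : ⟪a t, -g⟫ = 1 := by rw [inner_neg_right, ← h]; ring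
      exact (inner_eq_one_iff_of_norm_eq_one (hunit t ht) (by simp [hg])).1 h'
  -- derivative of θ t = arccos ⟪a t, g⟫
  have hθderiv : ∀ t : ℝ, 0 ≤ t →
      HasDerivAt (fun s => Real.arccos ⟪a s, g⟫) (-(k * Real.arccos ⟪a t, g⟫)) t := by
    intro t ht
    set c : ℝ := ⟪a t, g⟫ with hcdef
    have hc1 : c < 1 := hlt t ht
    have hc2 : -1 < c := hgt t ht
    have hpos : (0:ℝ) < 1 - c ^ 2 := by nlinarith
    have hsq : (0:ℝ) < Real.sqrt (1 - c ^ 2) := Real.sqrt_pos.2 hpos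
    have hcderiv : HasDerivAt (fun s => ⟪a s, g⟫)
        (k * Real.arccos c * Real.sqrt (1 - c ^ 2)) t := by
      have h := (hode t ht).inner ℝ (hasDerivAt_const t g)
      have hi : ⟪a t, (0 : EuclideanSpace ℝ (Fin (n+1)))⟫ + ⟪k • sphLog (a t) g, g⟫
          = k * Real.arccos c * Real.sqrt (1 - c ^ 2) := by
        rw [inner_zero_right, real_inner_smul_left,
          sphLog_inner_goal (a t) g (hunit t ht) hg hc1 hc2]
        ring
      rw [hi] at h
      exact h
    have harccos := (Real.hasDerivAt_arccos (ne_of_gt hc2) (ne_of_lt hc1)).comp t hcderiv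
    have : -(1 / Real.sqrt (1 - c ^ 2)) * (k * Real.arccos c * Real.sqrt (1 - c ^ 2))
        = -(k * Real.arccos c) := by
      field_simp
    rw [this] at harccos
    exact harccos
  -- the function e^{kt} θ t has zero derivative on [0,∞)
  set F : ℝ → ℝ := fun t => Real.exp (k * t) * Real.arccos ⟪a t, g⟫ with hF
  have hFderiv : ∀ t : ℝ, 0 ≤ t → HasDerivAt F 0 t := by
    intro t ht
    have hexp : HasDerivAt (fun s : ℝ => Real.exp (k * s)) (Real.exp (k * t) * k) t := by
      simpa using ((hasDerivAt_id t).const_mul k).exp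
    have := hexp.mul (hθderiv t ht)
    have heq : Real.exp (k * t) * k * Real.arccos ⟪a t, g⟫ +
        Real.exp (k * t) * -(k * Real.arccos ⟪a t, g⟫) = 0 := by ring
    rw [heq] at this
    exact this
  -- hence F is constant on [0,∞)
  have hFconst : ∀ t : ℝ, 0 ≤ t → F t = F 0 := by
    intro t ht
    have hcont : ContinuousOn F (Set.Icc 0 t) := fun x hx =>
      ((hFderiv x hx.1).continuousAt).continuousWithinAt
    have hder : ∀ x ∈ Set.Ico 0 t, HasDerivWithinAt F 0 (Set.Ici x) x := fun x hx =>
      (hFderiv x hx.1).hasDerivWithinAt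
    exact constant_of_has_deriv_right_zero hcont hder t ⟨ht, le_refl t⟩
  have hmain : ∀ t : ℝ, 0 ≤ t →
      Real.arccos ⟪a t, g⟫ = Real.exp (-k * t) * Real.arccos ⟪a 0, g⟫ := by
    intro t ht
    have h := hFconst t ht
    simp only [hF, mul_zero, Real.exp_zero, one_mul] at h
    have hexpne : Real.exp (k * t) ≠ 0 := (Real.exp_pos _).ne'
    rw [neg_mul, Real.exp_neg, ← h, inv_mul_cancel_left₀ hexpne]
  refine ⟨hmain, ?_⟩
  -- convergence
  have hθ0 : Tendsto (fun t => Real.arccos ⟪a t, g⟫) atTop (nhds 0) := by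
    have hexp : Tendsto (fun t : ℝ => Real.exp (-k * t)) atTop (nhds 0) := by
      apply Real.tendsto_exp_atBot.comp
      have h1 : Tendsto (fun t : ℝ => k * t) atTop atTop :=
        Tendsto.const_mul_atTop hk tendsto_id
      exact (tendsto_neg_atTop_atBot.comp h1).congr fun t => by simp [neg_mul]
    have := hexp.mul_const (Real.arccos ⟪a 0, g⟫)
    rw [zero_mul] at this
    apply this.congr'
    filter_upwards [eventually_ge_atTop (0:ℝ)] with t ht
    exact (hmain t ht).symm
  have hc1 : Tendsto (fun t => ⟪a t, g⟫) atTop (nhds 1) := by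
    have hcos : Tendsto (fun t => Real.cos (Real.arccos ⟪a t, g⟫)) atTop (nhds 1) := by
      have := (Real.continuous_cos.tendsto 0).comp hθ0
      simpa [Function.comp_def] using this
    apply hcos.congr'
    filter_upwards [eventually_ge_atTop (0:ℝ)] with t ht
    exact Real.cos_arccos (hgt t ht).le (hlt t ht).le
  have hnorm : Tendsto (fun t => ‖a t - g‖) atTop (nhds 0) := by
    have hs : Tendsto (fun t => Real.sqrt (2 - 2 * ⟪a t, g⟫)) atTop (nhds 0) := by
      have h2 : Tendsto (fun t => 2 - 2 * ⟪a t, g⟫) atTop (nhds 0) := by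
        have := (hc1.const_mul 2).const_sub 2
        simpa using this
      have := (Real.continuous_sqrt.tendsto 0).comp h2
      simpa [Function.comp_def] using this
    apply hs.congr'
    filter_upwards [eventually_ge_atTop (0:ℝ)] with t ht
    have hsq : ‖a t - g‖ ^ 2 = 2 - 2 * ⟪a t, g⟫ := by
      rw [norm_sub_sq_real, hunit t ht, hg]; ring
    rw [← hsq, Real.sqrt_sq (norm_nonneg _)]
  exact tendsto_iff_norm_sub_tendsto_zero.2 hnorm
end
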